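/- arXiv:0711.4100 — 3 statements merged into one kernel-verified Lean document; each statement's English description precedes it below -/
import Mathlib

section
/- Let n ≥ 2 be an integer and let (a, b) and (a′, b′) be vertices of C_n with a ≤ b, a + b ≤ n, a′ ≤ b′, a′ + b′ ≤ n, and a < a′. Then b < b′ and b − a < b′ − a′. -/
open Filter MeasureTheory

noncomputable section

/-- The set `G_n = {(a,b) : 1 ≤ a,b ≤ n-1, ab ≡ 1 (mod n)}` as a set of points in `ℝ²`. -/
def modPoints (n : ℕ) : Set (ℝ × ℝ) :=
  {p | ∃ a b : ℤ, 1 ≤ a ∧ a ≤ (n : ℤ) - 1 ∧ 1 ≤ b ∧ b ≤ (n : ℤ) - 1 ∧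
    (n : ℤ) ∣ a * b - 1 ∧ p = ((a : ℝ), (b : ℝ))}

/-- The convex closure `C_n` of `G_n`. -/
def modHull (n : ℕ) : Set (ℝ × ℝ) := convexHull ℝ (modPoints n)

/-- The set of vertices (extreme points) of `C_n`. -/
def modVertices (n : ℕ) : Set (ℝ × ℝ) := Set.extremePoints ℝ (modHull n)

/-! The reflection `(x, y) ↦ (n - y, n - x)` preserves `G_n`, and `(1, 1)`, `(n - 1, n - 1)` lie
in `G_n`. If `b' - a' ≤ b - a`, then `(a', b')` lies in the trapezoid with corners `(1, 1)`,
`(a, b)`, `(n - b, n - a)`, `(n - 1, n - 1)`, all in `G_n`; being extreme in `C_n`, it must be one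
of these corners, which `a < a'` and `a' + b' ≤ n` rule out. Finally `b < b'` follows from
`b - a < b' - a'` and `a < a'`. -/

lemma mk_intCast_mem_modPoints_iff {n : ℕ} {a b : ℤ} :
    ((a : ℝ), (b : ℝ)) ∈ modPoints n ↔
      1 ≤ a ∧ a ≤ (n : ℤ) - 1 ∧ 1 ≤ b ∧ b ≤ (n : ℤ) - 1 ∧ (n : ℤ) ∣ a * b - 1 := by
  constructor
  · rintro ⟨c, d, hc1, hcn, hd1, hdn, hdvd, h⟩
    obtain ⟨rfl, rfl⟩ : a = c ∧ b = d := by exact_mod_cast Prod.mk.inj h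
    exact ⟨hc1, hcn, hd1, hdn, hdvd⟩
  · rintro ⟨ha1, han, hb1, hbn, hdvd⟩
    exact ⟨a, b, ha1, han, hb1, hbn, hdvd, rfl⟩

/-- `(n - b)(n - a) ≡ ab (mod n)`. -/
lemma reflect_mem_modPoints {n : ℕ} {a b : ℤ} (h : ((a : ℝ), (b : ℝ)) ∈ modPoints n) :
    ((n : ℝ) - b, (n : ℝ) - a) ∈ modPoints n := by
  obtain ⟨ha1, han, hb1, hbn, k, hk⟩ := mk_intCast_mem_modPoints_iff.1 h
  have h' := (mk_intCast_mem_modPoints_iff (n := n) (a := n - b) (b := n - a)).2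
    ⟨by omega, by omega, by omega, by omega, ⟨n - a - b + k, by linear_combination hk⟩⟩
  push_cast at h'
  exact h'

lemma Convex.mk_add_mem_of_le_of_le {K : Set (ℝ × ℝ)} (hK : Convex ℝ K) {t xl xr x : ℝ}
    (hl : (xl, xl + t) ∈ K) (hr : (xr, xr + t) ∈ K) (hxl : xl ≤ x) (hxr : x ≤ xr) :
    (x, x + t) ∈ K := by
  have hx : x ∈ segment ℝ xl xr := by
    rw [segment_eq_Icc (hxl.trans hxr)]
    exact ⟨hxl, hxr⟩
  obtain ⟨α, β, hα, hβ, hαβ, rfl⟩ := hx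
  convert hK hl hr hα hβ hαβ using 1
  ext
  · simp
  · simp only [Prod.smul_mk, Prod.mk_add_mk, smul_eq_mul]
    linear_combination (-t) * hαβ

/-- The slice of the trapezoid at height `t = y - x` runs from `(1 - l)(1,1) + l(a,b)` to its
reflection in the antidiagonal, where `l = t / (b - a)`. -/
lemma mk_mem_convexHull_trapezoid {n a b x y : ℝ} (ha : 1 ≤ a) (hab : a ≤ b) (hax : a ≤ x)
    (hxy : x ≤ y) (hyx : y - x ≤ b - a) (hn : x + y ≤ n) :
    (x, y) ∈ convexHull ℝ {(1, 1), (a, b), (n - b, n - a), (n - 1, n - 1)} := by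
  set K := convexHull ℝ {((1 : ℝ), (1 : ℝ)), (a, b), (n - b, n - a), (n - 1, n - 1)}
  have hK : Convex ℝ K := convex_convexHull ℝ _
  have mem (p : ℝ × ℝ) (hp : p ∈ ({(1, 1), (a, b), (n - b, n - a), (n - 1, n - 1)} :
      Set (ℝ × ℝ))) : p ∈ K := subset_convexHull ℝ _ hp
  set t := y - x
  -- junk value: if `b = a` then `t = 0` and `l = 0` still satisfies `l * (b - a) = t`
  set l := t / (b - a)
  have hl0 : 0 ≤ l := div_nonneg (by linarith) (by linarith)
  have hl1 : l ≤ 1 := div_le_one_of_le₀ hyx (by linarith)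
  have hlt : l * (b - a) = t := by
    rcases hab.eq_or_lt with h | h
    · have : t = 0 := by linarith
      simp [this, h]
    · exact div_mul_cancel₀ _ (by linarith)
  have hL : (1 + l * (a - 1), 1 + l * (a - 1) + t) ∈ K := by
    convert hK (mem (1, 1) (by simp)) (mem (a, b) (by simp)) (by linarith : 0 ≤ 1 - l) hl0
      (by ring) using 1
    ext
    · simp only [Prod.smul_mk, Prod.mk_add_mk, smul_eq_mul]; ring
    · simp only [Prod.smul_mk, Prod.mk_add_mk, smul_eq_mul]; linear_combination -hlt
  have hR : (n - 1 - l * (b - 1), n - 1 - l * (b - 1) + t) ∈ K := by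
    convert hK (mem (n - 1, n - 1) (by simp)) (mem (n - b, n - a) (by simp))
      (by linarith : 0 ≤ 1 - l) hl0 (by ring) using 1
    ext
    · simp only [Prod.smul_mk, Prod.mk_add_mk, smul_eq_mul]; ring
    · simp only [Prod.smul_mk, Prod.mk_add_mk, smul_eq_mul]; linear_combination -hlt
  have hxL : 1 + l * (a - 1) ≤ x := by nlinarith
  -- `l (b - 1) ≤ y - 1` amounts to `t (a - 1) ≤ (b - a)(x - 1)`
  have hxR : x ≤ n - 1 - l * (b - 1) := by nlinarith
  simpa [t] using hK.mk_add_mem_of_le_of_le hL hR hxL hxR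

lemma mem_of_mem_extremePoints_convexHull_of_subset {E : Type*} [AddCommGroup E] [Module ℝ E]
    {s t : Set E} {x : E} (hx : x ∈ (convexHull ℝ s).extremePoints ℝ) (hts : t ⊆ s)
    (hxt : x ∈ convexHull ℝ t) : x ∈ t :=
  extremePoints_convexHull_subset <|
    inter_extremePoints_subset_extremePoints_of_subset (convexHull_mono hts) ⟨hxt, hx⟩

theorem stmt3_general (n : ℕ) (a b a' b' : ℤ)
    (hv : ((a : ℝ), (b : ℝ)) ∈ modVertices n)
    (hv' : ((a' : ℝ), (b' : ℝ)) ∈ modVertices n)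
    (hab : a ≤ b)
    (hab' : a' ≤ b') (hsum' : a' + b' ≤ (n : ℤ))
    (haa : a < a') :
    b < b' ∧ b - a < b' - a' := by
  suffices h : b - a < b' - a' from ⟨by omega, h⟩
  by_contra! hd
  have hvG : ((a : ℝ), (b : ℝ)) ∈ modPoints n := extremePoints_convexHull_subset hv
  obtain ⟨ha1, han, -⟩ := mk_intCast_mem_modPoints_iff.1 hvG
  have h11 : ((1 : ℝ), (1 : ℝ)) ∈ modPoints n := by
    exact_mod_cast (mk_intCast_mem_modPoints_iff (n := n) (a := 1) (b := 1)).2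
      ⟨le_rfl, by omega, le_rfl, by omega, by simp⟩
  have hS : {((1 : ℝ), (1 : ℝ)), ((a : ℝ), (b : ℝ)), ((n : ℝ) - b, (n : ℝ) - a),
      ((n : ℝ) - 1, (n : ℝ) - 1)} ⊆ modPoints n := by
    have hnn := reflect_mem_modPoints (a := 1) (b := 1) (by exact_mod_cast h11)
    push_cast at hnn
    simp [Set.insert_subset_iff, h11, hvG, reflect_mem_modPoints hvG, hnn]
  have hmem := mk_mem_convexHull_trapezoid (n := n) (a := a) (b := b) (x := a') (y := b')
    (by exact_mod_cast ha1) (by exact_mod_cast hab) (by exact_mod_cast haa.le)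
    (by exact_mod_cast hab') (by exact_mod_cast hd) (by exact_mod_cast hsum')
  have := mem_of_mem_extremePoints_convexHull_of_subset hv' hS hmem
  simp only [Set.mem_insert_iff, Set.mem_singleton_iff, Prod.mk.injEq] at this
  rcases this with ⟨h1, -⟩ | ⟨h1, -⟩ | ⟨h1, h2⟩ | ⟨h1, h2⟩
  · have : a' = 1 := by exact_mod_cast h1
    omega
  · have : a' = a := by exact_mod_cast h1
    omega
  · have : a' = n - b := by exact_mod_cast h1
    have : b' = n - a := by exact_mod_cast h2
    omega
  · have : a' = n - 1 := by exact_mod_cast h1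
    have : b' = n - 1 := by exact_mod_cast h2
    omega

theorem stmt3 (n : ℕ) (hn : 2 ≤ n) (a b a' b' : ℤ)
    (hv : ((a : ℝ), (b : ℝ)) ∈ modVertices n)
    (hv' : ((a' : ℝ), (b' : ℝ)) ∈ modVertices n)
    (hab : a ≤ b) (hsum : a + b ≤ (n : ℤ))
    (hab' : a' ≤ b') (hsum' : a' + b' ≤ (n : ℤ))
    (haa : a < a') :
    b < b' ∧ b - a < b' - a' :=
  stmt3_general n a b a' b' hv hv' hab hab' hsum' haa
end
end

section
/- For every integer n ≥ 2, v(n) ≥ 2(τ(n−1) − 1). -/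
open Filter MeasureTheory

noncomputable section

/-- `v(n)`, the number of vertices of `C_n`. -/
def numVertices (n : ℕ) : ℕ := (modVertices n).ncard

/-!
Write `m = n - 1`. A point `(a, b)` of `G_n` has `a (n - b) ≡ -1 (mod n)` and `a (n - b) > 0`,
hence `a (n - b) ≥ m`: in the coordinates `(x, n - y)`, `G_n` lies on or above the hyperbola
`x y = m`. For each factorization `m = d e` the point `(d, n - e)` of `G_n` lies on this hyperbola,
so the tangent line there supports `G_n` at that point alone, making it a vertex of `C_n`. Its
mirror image `(n - e, d)` is a vertex as well, and the two families of `τ(m)` vertices share at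
most the two diagonal points `(1, 1)` and `(m, m)`.
-/

section ExtremePoints

variable {𝕜 E : Type*} [Field 𝕜] [LinearOrder 𝕜] [IsStrictOrderedRing 𝕜]
  [AddCommGroup E] [Module 𝕜 E]

lemma convex_insert_setOf_lt (f : E →ₗ[𝕜] 𝕜) (p : E) :
    Convex 𝕜 (insert p {y | f y < f p}) := by
  refine convex_iff_forall_pos.2 fun x hx y hy a b ha hb hab => ?_
  have hle : ∀ z ∈ insert p {y | f y < f p}, f z ≤ f p := by
    rintro z (rfl | hz)
    exacts [le_rfl, le_of_lt hz]
  have hcombo : f (a • x + b • y) = a * f x + b * f y := by simp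
  obtain rfl := eq_sub_of_add_eq hab
  rcases hx with rfl | hx
  · rcases hy with rfl | hy
    · exact .inl (Convex.combo_self (sub_add_cancel 1 b) _)
    · exact .inr (by
        rw [Set.mem_ofPred_eq, hcombo]; nlinarith [mul_lt_mul_of_pos_left hy hb])
  · exact .inr (by
      rw [Set.mem_ofPred_eq, hcombo]
      nlinarith [mul_lt_mul_of_pos_left hx ha, mul_le_mul_of_nonneg_left (hle y hy) hb.le])

lemma mem_extremePoints_convexHull_of_forall_lt {S : Set E} {p : E} (f : E →ₗ[𝕜] 𝕜)
    (hp : p ∈ S) (hf : ∀ q ∈ S, q ≠ p → f q < f p) :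
    p ∈ (convexHull 𝕜 S).extremePoints 𝕜 := by
  have hT : convexHull 𝕜 S ⊆ insert p {y | f y < f p} :=
    convexHull_min (fun q hq => or_iff_not_imp_left.2 (hf q hq)) (convex_insert_setOf_lt f p)
  have hle : ∀ x ∈ convexHull 𝕜 S, f x ≤ f p := fun x hx => by
    rcases hT hx with rfl | h
    exacts [le_rfl, le_of_lt h]
  have heq : ∀ x ∈ convexHull 𝕜 S, f p ≤ f x → x = p := fun x hx h =>
    (hT hx).resolve_right h.not_gt
  refine mem_extremePoints_iff_left.2
    ⟨subset_convexHull 𝕜 S hp, fun x₁ hx₁ x₂ hx₂ ⟨a, b, ha, hb, hab, hpx⟩ => heq x₁ hx₁ ?_⟩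
  have hfp : a * f x₁ + b * f x₂ = f p := by rw [← hpx]; simp
  obtain rfl := eq_sub_of_add_eq hab
  nlinarith [mul_le_mul_of_nonneg_left (hle x₂ hx₂) hb.le]

end ExtremePoints

/-- The line `e x + d y = 2 d e` is tangent to the hyperbola `x y = d e` at `(d, e)`. -/
lemma two_mul_mul_lt_of_mul_le_mul {R : Type*} [CommRing R] [LinearOrder R]
    [IsStrictOrderedRing R] {a c d e : R} (hd : 0 < d) (he : 0 < e) (ha : 0 < a)
    (hac : d * e ≤ a * c) (hne : (a, c) ≠ (d, e)) : 2 * (d * e) < e * a + d * c := by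
  have hid : a * (e * a + d * c - 2 * (d * e)) = e * (a - d) ^ 2 + d * (a * c - d * e) := by
    ring
  suffices 0 < e * (a - d) ^ 2 + d * (a * c - d * e) by nlinarith
  rcases eq_or_ne a d with rfl | had
  · have hec : e < c := lt_of_le_of_ne (le_of_mul_le_mul_left hac ha) fun h => hne (h ▸ rfl)
    nlinarith [mul_pos ha (sub_pos.2 hec)]
  · nlinarith [mul_pos he (pow_pos (abs_pos.2 (sub_ne_zero.2 had)) 2), sq_abs (a - d)]

lemma Int.sub_one_le_mul_sub_of_dvd {n a b : ℤ} (ha : 0 ≤ a) (hb : b ≤ n) (h : n ∣ a * b - 1) :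
    n - 1 ≤ a * (n - b) := by
  have hdvd : n ∣ a * (n - b) + 1 := by
    rw [show a * (n - b) + 1 = n * a - (a * b - 1) by ring]
    exact (dvd_mul_right n a).sub h
  linarith [Int.le_of_dvd (by nlinarith) hdvd]

lemma swap_mem_modPoints {n : ℕ} {p : ℝ × ℝ} (hp : p ∈ modPoints n) : p.swap ∈ modPoints n := by
  obtain ⟨a, b, ha₁, ha₂, hb₁, hb₂, h, rfl⟩ := hp
  exact ⟨b, a, hb₁, hb₂, ha₁, ha₂, mul_comm a b ▸ h, rfl⟩

lemma image_swap_modPoints (n : ℕ) : Prod.swap '' modPoints n = modPoints n := by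
  ext p
  rw [Set.image_swap_eq_preimage_swap, Set.mem_preimage]
  exact ⟨fun h => p.swap_swap ▸ swap_mem_modPoints h, swap_mem_modPoints⟩

lemma swap_mem_modVertices {n : ℕ} {p : ℝ × ℝ} (hp : p ∈ modVertices n) :
    p.swap ∈ modVertices n := by
  have h := Set.mem_image_of_mem (LinearEquiv.prodComm ℝ ℝ ℝ) hp
  have hswap : LinearEquiv.prodComm ℝ ℝ ℝ '' modHull n = modHull n := by
    rw [modHull, ← LinearEquiv.coe_coe, LinearMap.image_convexHull]
    simp [image_swap_modPoints]
  rwa [modVertices, image_extremePoints, hswap] at h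

lemma modPoints_finite (n : ℕ) : (modPoints n).Finite := by
  refine (((Set.finite_Icc (1 : ℤ) (n - 1)).prod (Set.finite_Icc (1 : ℤ) (n - 1))).image
    fun q => ((q.1 : ℝ), (q.2 : ℝ))).subset ?_
  rintro _ ⟨a, b, ha₁, ha₂, hb₁, hb₂, -, rfl⟩
  exact ⟨(a, b), ⟨⟨ha₁, ha₂⟩, hb₁, hb₂⟩, rfl⟩

lemma modVertices_finite (n : ℕ) : (modVertices n).Finite :=
  (modPoints_finite n).subset extremePoints_convexHull_subset

lemma mk_mem_modVertices {n d e : ℕ} (hd : 0 < d) (he : 0 < e) (hn : d * e + 1 = n) :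
    ((d : ℝ), (n : ℝ) - e) ∈ modVertices n := by
  have hnZ : (d : ℤ) * e + 1 = n := by exact_mod_cast hn
  have hdZ : (1 : ℤ) ≤ d := by exact_mod_cast hd
  have heZ : (1 : ℤ) ≤ e := by exact_mod_cast he
  refine mem_extremePoints_convexHull_of_forall_lt
    ((d : ℝ) • LinearMap.snd ℝ ℝ ℝ - (e : ℝ) • LinearMap.fst ℝ ℝ ℝ) ?_ ?_
  · refine ⟨d, n - e, hdZ, by nlinarith, by nlinarith, by linarith,
      ⟨d - 1, by linear_combination -hnZ⟩, by push_cast; rfl⟩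
  · rintro _ ⟨a, b, ha, -, -, hb, hab, rfl⟩ hne
    have hmul : (n : ℝ) - 1 ≤ a * (n - b) := by
      exact_mod_cast Int.sub_one_le_mul_sub_of_dvd (by linarith) (by linarith) hab
    have hne' : ((a : ℝ), (n : ℝ) - b) ≠ ((d : ℝ), (e : ℝ)) := fun h => hne (by
      simp only [Prod.ext_iff] at h ⊢
      exact ⟨h.1, by linarith⟩)
    have hnR : (d : ℝ) * e + 1 = n := by exact_mod_cast hn
    have := two_mul_mul_lt_of_mul_le_mul (by positivity) (by positivity)
      (Int.cast_pos.2 ha) (by linarith) hne'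
    simp only [LinearMap.sub_apply, LinearMap.smul_apply, LinearMap.snd_apply,
      LinearMap.fst_apply, smul_eq_mul]
    linarith

lemma card_inter_image_swap_le_two {A : Finset (ℝ × ℝ)} {c : ℝ} (hc : c ≠ 0)
    (hA : ∀ p ∈ A, p.1 * (c - p.2) = c - 1) : (A ∩ A.image Prod.swap).card ≤ 2 := by
  refine (Finset.card_le_card (t := {(1, 1), (c - 1, c - 1)}) ?_).trans Finset.card_le_two
  intro p hp
  obtain ⟨hp, ⟨x, y⟩, hq, rfl⟩ := Finset.mem_inter.1 hp |>.imp_right Finset.mem_image.1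
  have h₁ := hA _ hp
  have h₂ := hA _ hq
  simp only [Prod.swap_prod_mk] at h₁ h₂ ⊢
  obtain rfl : y = x := mul_left_cancel₀ hc (by linear_combination h₁ - h₂)
  have hroot : (y - 1) * (y - (c - 1)) = 0 := by linear_combination -h₁
  rcases mul_eq_zero.1 hroot with h | h <;> simp [sub_eq_zero.1 h]

lemma two_mul_card_sub_one_le_card_union_image_swap {A : Finset (ℝ × ℝ)} {c : ℝ} (hc : c ≠ 0)
    (hA : ∀ p ∈ A, p.1 * (c - p.2) = c - 1) :
    2 * (A.card - 1) ≤ (A ∪ A.image Prod.swap).card := by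
  have hunion := Finset.card_union_add_card_inter A (A.image Prod.swap)
  have hswap := Finset.card_image_of_injective A Prod.swap_injective
  have hinter := card_inter_image_swap_le_two hc hA
  omega

def divisorPoints (m : ℕ) : Finset (ℝ × ℝ) :=
  m.divisorsAntidiagonal.image fun de => ((de.1 : ℝ), ((m + 1 : ℕ) : ℝ) - de.2)

lemma card_divisorPoints (m : ℕ) : (divisorPoints m).card = m.divisors.card := by
  rw [divisorPoints, Finset.card_image_of_injective, ← Nat.map_div_right_divisors,
    Finset.card_map]
  intro x y h
  simp only [Prod.ext_iff, Nat.cast_inj, sub_right_inj] at h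
  exact Prod.ext h.1 h.2

lemma fst_mul_sub_snd_of_mem_divisorPoints {m : ℕ} {p : ℝ × ℝ} (hp : p ∈ divisorPoints m) :
    p.1 * (((m + 1 : ℕ) : ℝ) - p.2) = ((m + 1 : ℕ) : ℝ) - 1 := by
  obtain ⟨⟨d, e⟩, hde, rfl⟩ := Finset.mem_image.1 hp
  rw [← (Nat.mem_divisorsAntidiagonal.1 hde).1]
  push_cast
  ring

lemma divisorPoints_subset_modVertices (m : ℕ) : ↑(divisorPoints m) ⊆ modVertices (m + 1) := by
  intro p hp
  obtain ⟨⟨d, e⟩, hde, rfl⟩ := Finset.mem_image.1 hp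
  obtain ⟨hde, hm⟩ := Nat.mem_divisorsAntidiagonal.1 hde
  rw [← hde] at hm
  exact mk_mem_modVertices (Nat.pos_of_ne_zero (left_ne_zero_of_mul hm))
    (Nat.pos_of_ne_zero (right_ne_zero_of_mul hm)) (by rw [hde])

theorem stmt7_general (n : ℕ) :
    2 * ((n - 1).divisors.card - 1) ≤ numVertices n := by
  rcases n with _ | m
  · simp
  have hV : ↑(divisorPoints m ∪ (divisorPoints m).image Prod.swap) ⊆ modVertices (m + 1) := by
    rw [Finset.coe_union, Finset.coe_image]
    exact Set.union_subset (divisorPoints_subset_modVertices m) <| Set.image_subset_iff.2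
      fun _ hp => swap_mem_modVertices (divisorPoints_subset_modVertices m hp)
  calc 2 * ((m + 1 - 1).divisors.card - 1) = 2 * ((divisorPoints m).card - 1) := by
        rw [card_divisorPoints, Nat.add_sub_cancel]
    _ ≤ (divisorPoints m ∪ (divisorPoints m).image Prod.swap).card :=
        two_mul_card_sub_one_le_card_union_image_swap (by positivity)
          fun _ => fst_mul_sub_snd_of_mem_divisorPoints
    _ ≤ numVertices (m + 1) := by
        rw [← Set.ncard_coe_finset]
        exact Set.ncard_le_ncard hV (modVertices_finite _)

theorem stmt7 (n : ℕ) (hn : 2 ≤ n) :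
    2 * ((n - 1).divisors.card - 1) ≤ numVertices n :=
  stmt7_general n
end
end

section
/- For every ε > 0 there exists N such that for all integers n ≥ N, v(n) ≤ T(n−1)·n^{ε}. -/
open Filter MeasureTheory

noncomputable section

/-- `T(s)`, the maximal ratio `d_{i+1}/d_i` of consecutive divisors of `s`. -/
def Tratio (s : ℕ) : ℝ :=
  sSup {r : ℝ | ∃ d e : ℕ, d ∣ s ∧ e ∣ s ∧ d < e ∧
    (∀ f : ℕ, f ∣ s → ¬(d < f ∧ f < e)) ∧ r = (e : ℝ) / (d : ℝ)}

/-!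
Write `n = s + 1`. For every divisor `d` of `s` the point `(d, n - s / d)` lies in `G_n`, and `G_n`
is invariant under the reflection `(x, y) ↦ (n - x, n - y)`. Let `(a, b)` be a vertex of `C_n` and
let `d < e` be consecutive divisors of `s` with `d ≤ a ≤ e`. The chord from `(d, n - s / d)` to
`(e, n - s / e)` lies in `C_n`, and so does the reflection of the corresponding chord at `n - a`; a
vertex cannot lie strictly between two points of `C_n` on its vertical line, so `(a, b)` is on or
above the first chord or on or below the reflected one. In the first case `a (n - b) = l n - 1` for
some `l ≥ 1`, and the chord bound `a (n - b) d ≤ s e` forces `l d ≤ e`, i.e. `l ≤ e / d ≤ T(s)`; the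
second case is its reflection. So every vertex is one of the at most `2 τ(l n - 1)` lattice points
on the hyperbolas `x (n - y) = l n - 1` or `(n - x) y = l n - 1` with `1 ≤ l ≤ T(s)`, and the
divisor bound `τ(m) ≤ C m ^ (ε / 4)` gives `v(n) ≤ T(s) ⬝ 2 C n ^ (ε / 2) ≤ T(s) n ^ ε` for
large `n`.
-/

open Finset

lemma add_one_le_rpow_pow_of_two_le_rpow {x ε : ℝ} (hx : 0 ≤ x) (h : 2 ≤ x ^ ε) (k : ℕ) :
    (k + 1 : ℝ) ≤ (x ^ k) ^ ε := by
  rw [← Real.rpow_natCast, ← Real.rpow_mul hx, mul_comm, Real.rpow_mul hx, Real.rpow_natCast]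
  calc (k + 1 : ℝ) ≤ 2 ^ k := by exact_mod_cast Nat.lt_two_pow_self
    _ ≤ (x ^ ε) ^ k := pow_le_pow_left₀ zero_le_two h k

lemma add_one_le_mul_rpow_pow {x ε : ℝ} (hx : 2 ≤ x) (hε : 0 < ε) (k : ℕ) :
    (k + 1 : ℝ) ≤ max 1 (ε * Real.log 2)⁻¹ * (x ^ k) ^ ε := by
  have hc : 0 < ε * Real.log 2 := mul_pos hε (Real.log_pos one_lt_two)
  have hK : 1 ≤ max 1 (ε * Real.log 2)⁻¹ * (ε * Real.log 2) := by
    rw [← div_le_iff₀ hc, one_div]; exact le_max_right _ _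
  have hexp : 1 + ε * Real.log 2 * k ≤ (x ^ k) ^ ε := calc
    1 + ε * Real.log 2 * k ≤ Real.exp (ε * Real.log 2 * k) := by
        linarith [Real.add_one_le_exp (ε * Real.log 2 * k)]
    _ = ((2 : ℝ) ^ k) ^ ε := by
        rw [← Real.rpow_natCast, ← Real.rpow_mul zero_le_two, Real.rpow_def_of_pos two_pos]
        ring_nf
    _ ≤ (x ^ k) ^ ε := by gcongr
  have hk : (0 : ℝ) ≤ k := k.cast_nonneg
  nlinarith [le_max_left 1 (ε * Real.log 2)⁻¹]

theorem Nat.exists_card_divisors_le_mul_rpow {ε : ℝ} (hε : 0 < ε) :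
    ∃ C : ℝ, 0 ≤ C ∧ ∀ m : ℕ, (#m.divisors : ℝ) ≤ C * (m : ℝ) ^ ε := by
  set K := max 1 (ε * Real.log 2)⁻¹
  have hK : 1 ≤ K := le_max_left _ _
  set B := ⌈(2 : ℝ) ^ ε⁻¹⌉₊
  refine ⟨K ^ B, by positivity, fun m => ?_⟩
  rcases eq_or_ne m 0 with rfl | hm
  · simp [Real.zero_rpow hε.ne']
  -- a prime `p ≥ B` has `p ^ ε ≥ 2`, so only the primes below `B` cost a factor `K`
  have hprime : ∀ p ∈ m.primeFactors, (m.factorization p + 1 : ℝ) ≤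
      (if p < B then K else 1) * ((p : ℝ) ^ m.factorization p) ^ ε := by
    intro p hp
    have hp2 : (2 : ℝ) ≤ p := by exact_mod_cast (Nat.prime_of_mem_primeFactors hp).two_le
    split_ifs with hpB
    · exact add_one_le_mul_rpow_pow hp2 hε _
    · rw [one_mul]
      refine add_one_le_rpow_pow_of_two_le_rpow (by positivity) ?_ _
      calc (2 : ℝ) = ((2 : ℝ) ^ ε⁻¹) ^ ε := by
            rw [← Real.rpow_mul zero_le_two, inv_mul_cancel₀ hε.ne', Real.rpow_one]
        _ ≤ (p : ℝ) ^ ε := by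
            gcongr
            exact (Nat.le_ceil _).trans (by exact_mod_cast not_lt.1 hpB)
  have hsmall : ∏ p ∈ m.primeFactors, (if p < B then K else 1) ≤ K ^ B := by
    rw [prod_ite, prod_const, prod_const_one, mul_one]
    refine pow_le_pow_right₀ hK ((card_le_card fun p hp => ?_).trans (card_range B).le)
    exact mem_range.2 (mem_filter.1 hp).2
  calc (#m.divisors : ℝ) = ∏ p ∈ m.primeFactors, (m.factorization p + 1 : ℝ) := by
        rw [Nat.card_divisors hm]; push_cast; rfl
    _ ≤ ∏ p ∈ m.primeFactors, (if p < B then K else 1) * ((p : ℝ) ^ m.factorization p) ^ ε :=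
        prod_le_prod (fun _ _ => by positivity) hprime
    _ = (∏ p ∈ m.primeFactors, (if p < B then K else 1)) * (m : ℝ) ^ ε := by
        rw [prod_mul_distrib, Real.finsetProd_rpow _ _ (fun _ _ => by positivity)]
        congr 2
        exact_mod_cast (Nat.prod_primeFactors_pow_factorization hm).symm
    _ ≤ K ^ B * (m : ℝ) ^ ε := by gcongr

lemma mk_mem_segment_of_mem_Icc {x₁ x₂ y₁ y₂ x : ℝ} (h : x₁ < x₂) (hx₁ : x₁ ≤ x) (hx₂ : x ≤ x₂) :
    (x, y₁ + (y₂ - y₁) / (x₂ - x₁) * (x - x₁)) ∈ segment ℝ (x₁, y₁) (x₂, y₂) := by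
  have h0 : x₂ - x₁ ≠ 0 := (sub_pos.2 h).ne'
  refine ⟨(x₂ - x) / (x₂ - x₁), (x - x₁) / (x₂ - x₁), div_nonneg (by linarith) (by linarith),
    div_nonneg (by linarith) (by linarith), by field_simp; ring, ?_⟩
  ext <;> simp only [Prod.fst_add, Prod.snd_add, Prod.smul_fst, Prod.smul_snd, smul_eq_mul] <;>
    field_simp <;> ring

lemma le_of_mem_extremePoints {E : Type*} [AddCommGroup E] [Module ℝ E] {A : Set (E × ℝ)}
    {x : E} {y y₁ y₂ : ℝ} (hp : (x, y) ∈ A.extremePoints ℝ) (h₁ : (x, y₁) ∈ A) (h₂ : (x, y₂) ∈ A)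
    (hy₁ : y₁ < y) : y₂ ≤ y := by
  by_contra! hy₂
  have hseg : (x, y) ∈ openSegment ℝ (x, y₁) (x, y₂) := by
    rw [← Prod.image_mk_openSegment_right, openSegment_eq_Ioo (hy₁.trans hy₂)]
    exact ⟨y, ⟨hy₁, hy₂⟩, rfl⟩
  exact hy₁.ne (Prod.ext_iff.1 (hp.2 h₁ h₂ hseg)).2

lemma natCast_div_le_of_dvd {s d e : ℕ} (hs : s ≠ 0) (hd : d ∣ s) (he : e ∣ s) :
    (e : ℝ) / d ≤ s := by
  have hd0 : 0 < d := Nat.pos_of_dvd_of_pos hd (Nat.pos_of_ne_zero hs)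
  calc (e : ℝ) / d ≤ e := div_le_self e.cast_nonneg (by exact_mod_cast hd0)
    _ ≤ s := by exact_mod_cast Nat.le_of_dvd (Nat.pos_of_ne_zero hs) he

lemma le_Tratio {s d e : ℕ} (hs : s ≠ 0) (hd : d ∣ s) (he : e ∣ s) (hde : d < e)
    (hcons : ∀ f : ℕ, f ∣ s → ¬(d < f ∧ f < e)) : (e : ℝ) / d ≤ Tratio s :=
  le_csSup ⟨s, by rintro _ ⟨d, e, hd, he, -, -, rfl⟩; exact natCast_div_le_of_dvd hs hd he⟩
    ⟨d, e, hd, he, hde, hcons, rfl⟩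

lemma Tratio_nonneg (s : ℕ) : 0 ≤ Tratio s :=
  Real.sSup_nonneg <| by rintro _ ⟨d, e, -, -, -, -, rfl⟩; positivity

lemma Tratio_le_self {s : ℕ} (hs : s ≠ 0) : Tratio s ≤ s :=
  Real.sSup_le (by rintro _ ⟨d, e, hd, he, -, -, rfl⟩; exact natCast_div_le_of_dvd hs hd he)
    s.cast_nonneg

lemma exists_consecutive_divisors {s x : ℕ} (hs : 1 < s) (hx0 : 0 < x) (hx : x ≤ s) :
    ∃ d e : ℕ, d ∣ s ∧ e ∣ s ∧ d < e ∧ (∀ f : ℕ, f ∣ s → ¬(d < f ∧ f < e)) ∧ d ≤ x ∧ x ≤ e := by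
  -- `d` is the largest proper divisor `≤ x`, `e` the next divisor after `d`
  have hs0 : s ≠ 0 := by omega
  set D := s.divisors.filter (fun y => y ≤ x ∧ y < s)
  have hD : D.Nonempty := ⟨1, mem_filter.2 ⟨Nat.one_mem_divisors.2 hs0, hx0, hs⟩⟩
  set d := D.max' hD
  have hdD := mem_filter.1 (D.max'_mem hD)
  set E := s.divisors.filter (fun y => d < y)
  have hE : E.Nonempty := ⟨s, mem_filter.2 ⟨Nat.mem_divisors_self s hs0, hdD.2.2⟩⟩
  have heE := mem_filter.1 (E.min'_mem hE)
  refine ⟨d, E.min' hE, Nat.dvd_of_mem_divisors hdD.1, Nat.dvd_of_mem_divisors heE.1,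
    heE.2, fun f hf ⟨hdf, hfe⟩ => ?_, hdD.2.1, ?_⟩
  · exact (E.min'_le f (mem_filter.2 ⟨Nat.mem_divisors.2 ⟨hf, hs0⟩, hdf⟩)).not_gt hfe
  · by_contra! hex
    refine (D.le_max' _ (mem_filter.2 ⟨heE.1, hex.le, ?_⟩)).not_gt heE.2
    omega

lemma mem_modPoints_iff {n : ℕ} {p : ℝ × ℝ} : p ∈ modPoints n ↔
    ∃ a b : ℕ, 0 < a ∧ a < n ∧ 0 < b ∧ b < n ∧ (a * b : ZMod n) = 1 ∧ p = ((a : ℝ), (b : ℝ)) := by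
  constructor
  · rintro ⟨a, b, ha, han, hb, hbn, hdvd, rfl⟩
    lift a to ℕ using by omega
    lift b to ℕ using by omega
    refine ⟨a, b, by omega, by omega, by omega, by omega, ?_, by simp⟩
    rw [← sub_eq_zero]
    exact_mod_cast (ZMod.intCast_zmod_eq_zero_iff_dvd _ n).2 hdvd
  · rintro ⟨a, b, ha, han, hb, hbn, hab, rfl⟩
    refine ⟨a, b, by omega, by omega, by omega, by omega, ?_, by simp⟩
    rw [← ZMod.intCast_zmod_eq_zero_iff_dvd]
    push_cast
    rw [hab, sub_self]

lemma natCast_sub_mul_natCast_sub_eq_one {n a b : ℕ} (ha : a ≤ n) (hb : b ≤ n)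
    (hab : (a * b : ZMod n) = 1) : ((n - a : ℕ) * (n - b : ℕ) : ZMod n) = 1 := by
  rw [Nat.cast_sub ha, Nat.cast_sub hb, ZMod.natCast_self]
  simpa using hab

lemma reflect_mem_modPoints_s18 {n : ℕ} {p : ℝ × ℝ} (hp : p ∈ modPoints n) :
    ((n : ℝ) - p.1, (n : ℝ) - p.2) ∈ modPoints n := by
  obtain ⟨a, b, ha, han, hb, hbn, hab, rfl⟩ := mem_modPoints_iff.1 hp
  refine mem_modPoints_iff.2 ⟨n - a, n - b, by omega, by omega, by omega, by omega, ?_, ?_⟩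
  · exact natCast_sub_mul_natCast_sub_eq_one han.le hbn.le hab
  · simp [Nat.cast_sub han.le, Nat.cast_sub hbn.le]

lemma reflect_mem_modHull {n : ℕ} {p : ℝ × ℝ} (hp : p ∈ modHull n) :
    ((n : ℝ) - p.1, (n : ℝ) - p.2) ∈ modHull n := by
  let f : ℝ × ℝ →ᵃ[ℝ] ℝ × ℝ := AffineMap.const ℝ (ℝ × ℝ) ((n : ℝ), (n : ℝ)) - AffineMap.id ℝ _
  have hsub : f '' modPoints n ⊆ modPoints n := by
    rintro _ ⟨q, hq, rfl⟩
    exact reflect_mem_modPoints_s18 hq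
  have hfp : f p = ((n : ℝ) - p.1, (n : ℝ) - p.2) := rfl
  exact hfp ▸ convexHull_mono hsub ((f.image_convexHull (modPoints n)) ▸ Set.mem_image_of_mem f hp)

lemma divisorPoint_mem_modPoints {s d : ℕ} (hs : s ≠ 0) (hd : d ∣ s) :
    ((d : ℝ), (s : ℝ) + 1 - s / d) ∈ modPoints (s + 1) := by
  have hd0 : 0 < d := Nat.pos_of_dvd_of_pos hd (Nat.pos_of_ne_zero hs)
  have hq0 : 0 < s / d := Nat.div_pos (Nat.le_of_dvd (Nat.pos_of_ne_zero hs) hd) hd0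
  have hqs : s / d ≤ s := Nat.div_le_self s d
  have hds : d ≤ s := Nat.le_of_dvd (Nat.pos_of_ne_zero hs) hd
  refine mem_modPoints_iff.2 ⟨d, s + 1 - s / d, hd0, by omega, by omega, by omega, ?_, ?_⟩
  · have h0 : ((s + 1 : ℕ) : ZMod (s + 1)) = 0 := ZMod.natCast_self _
    rw [Nat.cast_sub (by omega), h0, zero_sub, mul_neg, ← Nat.cast_mul, Nat.mul_div_cancel' hd]
    push_cast at h0
    linear_combination -h0
  · rw [Nat.cast_sub (by omega), Nat.cast_div hd (by positivity)]
    push_cast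
    ring_nf

lemma chordPoint_mem_modHull {s d e : ℕ} (hs : s ≠ 0) (hd : d ∣ s) (he : e ∣ s) (hde : d < e)
    {x : ℝ} (hdx : d ≤ x) (hxe : x ≤ e) :
    (x, (s : ℝ) + 1 - s * (d + e - x) / (d * e)) ∈ modHull (s + 1) := by
  have hd0 : (0 : ℝ) < d := by exact_mod_cast Nat.pos_of_dvd_of_pos hd (Nat.pos_of_ne_zero hs)
  have hde' : (d : ℝ) < e := by exact_mod_cast hde
  have hseg := (convex_convexHull ℝ _).segment_subset
    (subset_convexHull ℝ _ (divisorPoint_mem_modPoints hs hd))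
    (subset_convexHull ℝ _ (divisorPoint_mem_modPoints hs he))
    (mk_mem_segment_of_mem_Icc hde' hdx hxe)
  have he0 : (0 : ℝ) < e := hd0.trans hde'
  have hed : (e : ℝ) - d ≠ 0 := (sub_pos.2 hde').ne'
  have hy : (s : ℝ) + 1 - s * (d + e - x) / (d * e) =
      s + 1 - s / d + (s + 1 - s / e - (s + 1 - s / d)) / (e - d) * (x - d) := by
    field_simp
    ring
  rwa [modHull, hy]

lemma mul_le_of_mul_sub_one_le {s k l d e : ℕ} (hde : d < e) (hkl : k + 1 = (s + 1) * l)
    (hk : k * d ≤ s * e) : l * d ≤ e := by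
  by_contra! h
  have : (s + 1) * (e + 1) ≤ (k + 1) * d := by rw [hkl, mul_assoc]; exact Nat.mul_le_mul_left _ h
  nlinarith

lemma exists_level_of_le_chord {s a b d e : ℕ} (hs : s ≠ 0) (hb : b ≤ s + 1)
    (hab : (a * b : ZMod (s + 1)) = 1) (hd : d ∣ s) (he : e ∣ s) (hde : d < e)
    (hcons : ∀ f : ℕ, f ∣ s → ¬(d < f ∧ f < e)) (hda : d ≤ a) (hae : a ≤ e)
    (hchord : (s : ℝ) + 1 - s * (d + e - a) / (d * e) ≤ b) :
    ∃ l : ℕ, 0 < l ∧ (l : ℝ) ≤ Tratio s ∧ a * (s + 1 - b) + 1 = l * (s + 1) := by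
  obtain ⟨l, hl⟩ : s + 1 ∣ a * (s + 1 - b) + 1 := by
    rw [← ZMod.natCast_eq_zero_iff, Nat.cast_add, Nat.cast_mul, Nat.cast_sub hb,
      ZMod.natCast_self, zero_sub, mul_neg, hab]
    simp
  have hd0 : (0 : ℝ) < d := by exact_mod_cast Nat.pos_of_dvd_of_pos hd (Nat.pos_of_ne_zero hs)
  have he0 : (0 : ℝ) < e := hd0.trans (by exact_mod_cast hde)
  -- `a (d + e - a) ≤ e²` on `[d, e]`, so `a (s + 1 - b) ≤ s e / d`
  have hreal : (a : ℝ) * ((s : ℝ) + 1 - b) * d ≤ s * e := by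
    have hda' : (d : ℝ) ≤ a := by exact_mod_cast hda
    have hae' : (a : ℝ) ≤ e := by exact_mod_cast hae
    have h1 : (a : ℝ) * (d + e - a) ≤ e * e := by nlinarith
    have h2 : (s : ℝ) + 1 - b ≤ s * (d + e - a) / (d * e) := by linarith
    rw [le_div_iff₀ (by positivity)] at h2
    nlinarith [mul_le_mul_of_nonneg_left h2 (a.cast_nonneg : (0 : ℝ) ≤ a)]
  have hnat : a * (s + 1 - b) * d ≤ s * e := by
    rw [← Nat.cast_le (α := ℝ)]
    push_cast [Nat.cast_sub hb]
    exact hreal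
  have hld := mul_le_of_mul_sub_one_le hde hl hnat
  refine ⟨l, Nat.pos_of_ne_zero (by rintro rfl; simp at hl), ?_, by rw [hl, mul_comm]⟩
  calc (l : ℝ) ≤ e / d := by rw [le_div_iff₀ hd0]; exact_mod_cast hld
    _ ≤ Tratio s := le_Tratio hs hd he hde hcons

/-- The lattice points `(x, y)` with `x (n - y) = l n - 1` or `(n - x) y = l n - 1`, where
`n = s + 1`. -/
def levelPoints (s l : ℕ) : Finset (ℝ × ℝ) :=
  let m := l * (s + 1) - 1
  m.divisors.image (fun c : ℕ => ((c : ℝ), (s : ℝ) + 1 - (m / c : ℕ))) ∪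
    m.divisors.image (fun c : ℕ => ((s : ℝ) + 1 - c, ((m / c : ℕ) : ℝ)))

lemma card_levelPoints_le (s l : ℕ) : #(levelPoints s l) ≤ 2 * #(l * (s + 1) - 1).divisors :=
  (card_union_le _ _).trans (by rw [two_mul]; exact add_le_add card_image_le card_image_le)

lemma mem_divisors_of_mul_add_one_eq {c y m : ℕ} (hc : 0 < c) (hy : 0 < y) (h : c * y + 1 = m) :
    c ∈ (m - 1).divisors ∧ (m - 1) / c = y := by
  have hm : m - 1 = c * y := by omega
  rw [hm, Nat.mul_div_cancel_left y hc]
  exact ⟨Nat.mem_divisors.2 ⟨dvd_mul_right c y, (Nat.mul_pos hc hy).ne'⟩, rfl⟩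

lemma exists_levelPoints_of_mem_modVertices {s : ℕ} (hs : 1 < s) {p : ℝ × ℝ}
    (hp : p ∈ modVertices (s + 1)) : ∃ l : ℕ, 0 < l ∧ (l : ℝ) ≤ Tratio s ∧ p ∈ levelPoints s l := by
  obtain ⟨a, b, ha, has, hb, hbs, hab, rfl⟩ :=
    mem_modPoints_iff.1 (extremePoints_convexHull_subset hp)
  have hs0 : s ≠ 0 := by omega
  obtain ⟨d, e, hd, he, hde, hcons, hda, hae⟩ :=
    exists_consecutive_divisors hs ha (by omega : a ≤ s)
  obtain ⟨d', e', hd', he', hde', hcons', hda', hae'⟩ :=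
    exists_consecutive_divisors hs (by omega : 0 < s + 1 - a) (by omega : s + 1 - a ≤ s)
  have hsa : ((s + 1 - a : ℕ) : ℝ) = s + 1 - a := by push_cast [Nat.cast_sub has.le]; ring
  have hsb : ((s + 1 - b : ℕ) : ℝ) = s + 1 - b := by push_cast [Nat.cast_sub hbs.le]; ring
  have htop := chordPoint_mem_modHull hs0 hd he hde (x := a) (by exact_mod_cast hda)
    (by exact_mod_cast hae)
  have hbot := reflect_mem_modHull (chordPoint_mem_modHull hs0 hd' he' hde'
    (x := ((s + 1 - a : ℕ) : ℝ)) (by exact_mod_cast hda') (by exact_mod_cast hae'))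
  push_cast [hsa] at hbot
  simp only [sub_sub_cancel] at hbot
  -- `(a, b)` cannot lie strictly between the reflected lower chord and the upper chord
  by_cases hlow : (s : ℝ) * (d' + e' - (s + 1 - a)) / (d' * e') < b
  · obtain ⟨l, hl0, hlT, hl⟩ := exists_level_of_le_chord hs0 hbs.le hab hd he hde hcons hda hae
      (le_of_mem_extremePoints hp hbot htop hlow)
    obtain ⟨hdiv, hq⟩ := mem_divisors_of_mul_add_one_eq ha (by omega) hl
    refine ⟨l, hl0, hlT, mem_union_left _ (mem_image.2 ⟨a, hdiv, ?_⟩)⟩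
    rw [hq, hsb]
    exact Prod.ext rfl (by ring)
  · obtain ⟨l, hl0, hlT, hl⟩ := exists_level_of_le_chord hs0 (a := s + 1 - a) (b := s + 1 - b)
      (by omega) (natCast_sub_mul_natCast_sub_eq_one has.le hbs.le hab) hd' he' hde' hcons' hda'
      hae' (by rw [hsa, hsb]; linarith)
    rw [Nat.sub_sub_self hbs.le] at hl
    obtain ⟨hdiv, hq⟩ := mem_divisors_of_mul_add_one_eq (by omega) hb hl
    refine ⟨l, hl0, hlT, mem_union_right _ (mem_image.2 ⟨s + 1 - a, hdiv, ?_⟩)⟩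
    rw [hq, hsa]
    exact Prod.ext (by ring) rfl

lemma numVertices_le_sum_card_levelPoints {s : ℕ} (hs : 1 < s) :
    numVertices (s + 1) ≤ ∑ l ∈ Icc 1 ⌊Tratio s⌋₊, #(levelPoints s l) := calc
  numVertices (s + 1) ≤ #((Icc 1 ⌊Tratio s⌋₊).biUnion (levelPoints s)) := by
    rw [numVertices, ← Set.ncard_coe_finset]
    refine Set.ncard_le_ncard (fun p hp => ?_) (finite_toSet _)
    obtain ⟨l, hl0, hlT, hpl⟩ := exists_levelPoints_of_mem_modVertices hs hp
    exact mem_coe.2 (mem_biUnion.2 ⟨l, mem_Icc.2 ⟨hl0, Nat.le_floor hlT⟩, hpl⟩)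
  _ ≤ _ := card_biUnion_le

lemma card_levelPoints_le_rpow {C δ : ℝ} (hC : 0 ≤ C) (hδ : 0 ≤ δ)
    (hτ : ∀ m : ℕ, (#m.divisors : ℝ) ≤ C * (m : ℝ) ^ δ) {s l : ℕ} (hl : l ≤ s + 1) :
    (#(levelPoints s l) : ℝ) ≤ 2 * C * ((s : ℝ) + 1) ^ (2 * δ) := calc
  (#(levelPoints s l) : ℝ) ≤ 2 * #(l * (s + 1) - 1).divisors := by
    exact_mod_cast card_levelPoints_le s l
  _ ≤ 2 * (C * ((l * (s + 1) - 1 : ℕ) : ℝ) ^ δ) := by gcongr; exact hτ _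
  _ ≤ 2 * (C * (((s : ℝ) + 1) ^ 2) ^ δ) := by
    gcongr
    have : l * (s + 1) - 1 ≤ (s + 1) ^ 2 := by rw [sq]; exact (Nat.sub_le _ _).trans (by gcongr)
    exact_mod_cast this
  _ = 2 * C * ((s : ℝ) + 1) ^ (2 * δ) := by
    rw [← Real.rpow_natCast_mul (by positivity)]
    push_cast
    ring

theorem stmt18 (ε : ℝ) (hε : 0 < ε) :
    ∃ N : ℕ, ∀ n : ℕ, N ≤ n → (numVertices n : ℝ) ≤ Tratio (n - 1) * (n : ℝ) ^ ε := by
  obtain ⟨C, hC0, hC⟩ := Nat.exists_card_divisors_le_mul_rpow (by positivity : 0 < ε / 4)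
  have hlarge : ∀ᶠ n : ℕ in atTop, 3 ≤ n ∧ 2 * C ≤ (n : ℝ) ^ (ε / 2) :=
    (eventually_ge_atTop 3).and <| ((tendsto_rpow_atTop (by positivity)).comp
      tendsto_natCast_atTop_atTop).eventually_ge_atTop _
  obtain ⟨N, hN⟩ := eventually_atTop.1 hlarge
  refine ⟨N, fun n hn => ?_⟩
  obtain ⟨hn3, hCn⟩ := hN n hn
  obtain ⟨s, rfl⟩ : ∃ s, n = s + 1 := ⟨n - 1, by omega⟩
  rw [Nat.add_sub_cancel]
  push_cast at hCn ⊢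
  have hL : ⌊Tratio s⌋₊ ≤ s + 1 :=
    Nat.floor_le_of_le ((Tratio_le_self (by omega)).trans (by simp))
  calc (numVertices (s + 1) : ℝ) ≤ ∑ l ∈ Icc 1 ⌊Tratio s⌋₊, (#(levelPoints s l) : ℝ) := by
        exact_mod_cast numVertices_le_sum_card_levelPoints (by omega)
    _ ≤ ∑ l ∈ Icc 1 ⌊Tratio s⌋₊, 2 * C * ((s : ℝ) + 1) ^ (2 * (ε / 4)) :=
        sum_le_sum fun l hl => card_levelPoints_le_rpow hC0 (by positivity) hC
          ((mem_Icc.1 hl).2.trans hL)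
    _ = ⌊Tratio s⌋₊ * (2 * C * ((s : ℝ) + 1) ^ (ε / 2)) := by
        rw [sum_const, Nat.card_Icc, nsmul_eq_mul, Nat.add_sub_cancel]
        ring_nf
    _ ≤ Tratio s * (((s : ℝ) + 1) ^ (ε / 2) * ((s : ℝ) + 1) ^ (ε / 2)) := by
        gcongr
        · exact Tratio_nonneg s
        · exact Nat.floor_le (Tratio_nonneg s)
    _ = Tratio s * ((s : ℝ) + 1) ^ ε := by
        rw [← Real.rpow_add (by positivity)]
        ring_nf
end
end
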